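/- If D is a Prüfer domain and I is a nonzero fractional ideal of D, then I is a quasi-cancellation ideal if and only if (I : I) = D. -/

import Mathlib

/-- `D` is a Prüfer domain: every nonzero finitely generated fractional ideal is
invertible. -/
def IsPruferDomain (D : Type*) [CommRing D] [IsDomain D] : Prop :=
  ∀ I : FractionalIdeal (nonZeroDivisors D) (FractionRing D),
    I ≠ 0 → (I : Submodule D (FractionRing D)).FG → I * I⁻¹ = 1

/-- In a Prüfer domain, a nonzero fractional ideal `I` is a quasi-cancellation ideal
iff `(I : I) = D`. -/
theorem quasiCancellation_iff_endo_trivial (D : Type*) [CommRing D] [IsDomain D]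
    (hD : IsPruferDomain D)
    (I : FractionalIdeal (nonZeroDivisors D) (FractionRing D)) (hI : I ≠ 0) :
    (∀ F : FractionalIdeal (nonZeroDivisors D) (FractionRing D),
        F ≠ 0 → (F : Submodule D (FractionRing D)).FG → (I * F) / I = F) ↔
    I / I = 1 := by
  constructor
  · intro h
    have h1 : (1 : FractionalIdeal (nonZeroDivisors D) (FractionRing D)) ≠ 0 := one_ne_zero
    have hfg : ((1 : FractionalIdeal (nonZeroDivisors D) (FractionRing D)) :
        Submodule D (FractionRing D)).FG := by
      rw [FractionalIdeal.coe_one, Submodule.one_eq_span]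
      exact Submodule.fg_span_singleton _
    have := h 1 h1 hfg
    rwa [mul_one] at this
  · intro hII F hF hFG
    have hFinv : F * F⁻¹ = 1 := hD F hF hFG
    apply le_antisymm
    · -- (I * F) / I ≤ F
      have hle : ((I * F) / I) * I ≤ I * F :=
        (FractionalIdeal.le_div_iff_mul_le hI).mp le_rfl
      have h2 : ((I * F) / I) * F⁻¹ * I ≤ I := by
        calc ((I * F) / I) * F⁻¹ * I = ((I * F) / I) * I * F⁻¹ := by ring
          _ ≤ (I * F) * F⁻¹ := by gcongr
          _ = I * (F * F⁻¹) := by ring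
          _ = I := by rw [hFinv, mul_one]
      have h3 : ((I * F) / I) * F⁻¹ ≤ 1 := by
        rw [← hII]
        exact (FractionalIdeal.le_div_iff_mul_le hI).mpr h2
      calc (I * F) / I = ((I * F) / I) * (F⁻¹ * F) := by rw [mul_comm F⁻¹ F, hFinv, mul_one]
        _ = ((I * F) / I) * F⁻¹ * F := by ring
        _ ≤ 1 * F := by gcongr
        _ = F := one_mul F
    · -- F ≤ (I * F) / I
      exact (FractionalIdeal.le_div_iff_mul_le hI).mpr (by rw [mul_comm])
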